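/- Let (R,G) be a first strong grading, i.e., supp(R,G) is a subgroup H of G and 1 ∈ R_σ R_{σ⁻¹} for all σ ∈ H. Then the intersection graph of graded left ideals Gr_G(R) is isomorphic to the intersection graph G(R_e) of left ideals of R_e. -/

import Mathlib

open scoped Pointwise

variable {G R : Type*} [AddGroup G] [DecidableEq G] [Ring R]

/-- The set of proper nontrivial `G`-graded left ideals of `R`. -/
def hV (𝒜 : G → AddSubgroup R) [GradedRing 𝒜] : Set (Ideal R) :=
  {I | I ≠ ⊥ ∧ I ≠ ⊤ ∧ Ideal.IsHomogeneous 𝒜 I}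

/-- The intersection graph on a set of (left) ideals: two distinct ideals are
adjacent iff their intersection is nonzero. -/
def interGraph (V : Set (Ideal R)) : SimpleGraph V where
  Adj I J := I ≠ J ∧ (I : Ideal R) ⊓ (J : Ideal R) ≠ ⊥
  symm := ⟨fun I J ⟨h1, h2⟩ => ⟨h1.symm, by rwa [inf_comm] at h2⟩⟩
  loopless := ⟨fun I ⟨h1, _⟩ => h1 rfl⟩
/-- The set of proper nontrivial left ideals of the identity component `R_e = 𝒜 0`. -/
def V0 (𝒜 : G → AddSubgroup R) [GradedRing 𝒜] : Set (Ideal ↥(𝒜 0)) :=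
  {I | I ≠ ⊥ ∧ I ≠ ⊤}

/-!
Restriction `I ↦ I ∩ R_e` and extension `J ↦ R J` are mutually inverse order isomorphisms between
the graded left ideals of `R` and the left ideals of `R_e`. Indeed `R J ∩ R_e = J` for every
grading, because `(r j)_e = r_e j` for `j ∈ R_e`; and `R (I ∩ R_e) = I` for graded `I`, because a
homogeneous `a ∈ I ∩ R_σ` equals `1 a ∈ R_σ R_{σ⁻¹} a ⊆ R (I ∩ R_e)`. An order isomorphism
preserves `⊥`, `⊤` and meets, so it induces an isomorphism of the intersection graphs.
-/

section GradeZero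

variable {ι : Type*} [AddMonoid ι] [DecidableEq ι] (𝒜 : ι → AddSubgroup R) [GradedRing 𝒜]

abbrev gradeZeroSubtype : 𝒜 0 →+* R := (SetLike.GradeZero.subring 𝒜).subtype

theorem isHomogeneous_map_gradeZeroSubtype (J : Ideal (𝒜 0)) :
    (J.map (gradeZeroSubtype 𝒜)).IsHomogeneous 𝒜 :=
  Ideal.homogeneous_span 𝒜 _ fun _ ⟨a, _, ha⟩ => ⟨0, ha ▸ a.2⟩

theorem comap_map_gradeZeroSubtype (J : Ideal (𝒜 0)) :
    (J.map (gradeZeroSubtype 𝒜)).comap (gradeZeroSubtype 𝒜) = J := by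
  -- `R J` lies in the left ideal of all `x` with `(r x)_e ∈ J` for every `r`, as `(r j)_e = r_e j`.
  let K : Ideal R :=
    { carrier := {x | ∀ r, DirectSum.decompose 𝒜 (r * x) 0 ∈ J}
      add_mem' := fun hx hy r => by
        simpa only [mul_add, DirectSum.decompose_add, DirectSum.add_apply] using
          J.add_mem (hx r) (hy r)
      zero_mem' := fun r => by simp
      smul_mem' := fun s x hx r => by simpa only [smul_eq_mul, ← mul_assoc] using hx (r * s) }
  have hJK : J.map (gradeZeroSubtype 𝒜) ≤ K := by
    refine Ideal.map_le_iff_le_comap.mpr fun a ha r => ?_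
    have hra : DirectSum.decompose 𝒜 (r * a) 0 = DirectSum.decompose 𝒜 r 0 * a :=
      Subtype.ext (DirectSum.coe_decompose_mul_of_right_mem_zero 𝒜 a.2)
    exact hra ▸ J.mul_mem_left _ ha
  refine le_antisymm (fun a ha => ?_) Ideal.le_comap_map
  have h1 : DirectSum.decompose 𝒜 (1 * (a : R)) 0 ∈ J := hJK ha 1
  rwa [one_mul, DirectSum.decompose_coe, DirectSum.of_eq_same] at h1

end GradeZero

def interGraphIso {S : Type*} [Ring S] {V : Set (Ideal R)} {W : Set (Ideal S)} (f : V ≃ W)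
    (hf : ∀ I J, (f I : Ideal S) ⊓ f J = ⊥ ↔ (I : Ideal R) ⊓ J = ⊥) :
    interGraph V ≃g interGraph W where
  toEquiv := f
  map_rel_iff' := and_congr f.injective.ne_iff (not_congr (hf _ _))

def hVEquivHomogeneousIdeal (𝒜 : G → AddSubgroup R) [GradedRing 𝒜] :
    hV 𝒜 ≃ {I : HomogeneousIdeal 𝒜 // I ≠ ⊥ ∧ I ≠ ⊤} where
  toFun I := ⟨⟨I.1, I.2.2.2⟩, (HomogeneousIdeal.eq_bot_iff _).not.mpr I.2.1,
    (HomogeneousIdeal.eq_top_iff _).not.mpr I.2.2.1⟩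
  invFun I := ⟨I.1.toIdeal, (HomogeneousIdeal.eq_bot_iff _).not.mp I.2.1,
    (HomogeneousIdeal.eq_top_iff _).not.mp I.2.2, I.1.isHomogeneous⟩
  left_inv _ := rfl
  right_inv _ := rfl

section FirstStrong

variable (𝒜 : G → AddSubgroup R) [GradedRing 𝒜]

def IsFirstStrong : Prop :=
  ∀ σ : G, 𝒜 σ ≠ ⊥ → (1 : R) ∈ AddSubgroup.closure ((𝒜 σ : Set R) * (𝒜 (-σ) : Set R))

variable {𝒜}

theorem IsFirstStrong.mem_map_comap_of_mem (h : IsFirstStrong 𝒜) {I : Ideal R} {σ : G} {a : R}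
    (haσ : a ∈ 𝒜 σ) (haI : a ∈ I) :
    a ∈ (I.comap (gradeZeroSubtype 𝒜)).map (gradeZeroSubtype 𝒜) := by
  rcases eq_or_ne a 0 with rfl | ha0
  · exact zero_mem _
  have hσ : 𝒜 σ ≠ ⊥ := fun hbot => ha0 (by simpa [hbot] using haσ)
  set M := (I.comap (gradeZeroSubtype 𝒜)).map (gradeZeroSubtype 𝒜)
  have hle : AddSubgroup.closure ((𝒜 σ : Set R) * (𝒜 (-σ) : Set R)) ≤
      M.toAddSubgroup.comap (AddMonoidHom.mulRight a) := by
    rw [AddSubgroup.closure_le]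
    rintro _ ⟨b, -, c, hc, rfl⟩
    have hca : c * a ∈ 𝒜 0 := by simpa using SetLike.mul_mem_graded hc haσ
    show b * c * a ∈ M
    rw [mul_assoc]
    exact Ideal.mul_mem_left _ b
      (Ideal.mem_map_of_mem (gradeZeroSubtype 𝒜) (x := ⟨c * a, hca⟩) (I.mul_mem_left c haI))
  simpa using hle (h σ hσ)

theorem IsFirstStrong.map_comap_gradeZeroSubtype (h : IsFirstStrong 𝒜) {I : Ideal R}
    (hI : I.IsHomogeneous 𝒜) :
    (I.comap (gradeZeroSubtype 𝒜)).map (gradeZeroSubtype 𝒜) = I := by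
  refine le_antisymm Ideal.map_comap_le ?_
  calc I = (I.homogeneousCore 𝒜).toIdeal := hI.toIdeal_homogeneousCore_eq_self.symm
    _ ≤ _ := Ideal.span_le.mpr ?_
  rintro _ ⟨⟨a, σ, haσ⟩, haI, rfl⟩
  exact h.mem_map_comap_of_mem haσ haI

def IsFirstStrong.homogeneousIdealOrderIso (h : IsFirstStrong 𝒜) :
    HomogeneousIdeal 𝒜 ≃o Ideal (𝒜 0) :=
  Equiv.toOrderIso
    { toFun I := I.toIdeal.comap (gradeZeroSubtype 𝒜)
      invFun J := ⟨J.map (gradeZeroSubtype 𝒜), isHomogeneous_map_gradeZeroSubtype 𝒜 J⟩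
      left_inv I := HomogeneousIdeal.ext (h.map_comap_gradeZeroSubtype I.isHomogeneous)
      right_inv := comap_map_gradeZeroSubtype 𝒜 }
    (fun _ _ hIJ => Ideal.comap_mono hIJ) (fun _ _ hJ => Ideal.map_mono hJ)

end FirstStrong

/-- If the grading is first strong, i.e. `1 ∈ R_σ R_{σ⁻¹}` (the
additive subgroup generated by such products) for every `σ` in the support, then
the intersection graph of graded left ideals of `R` is isomorphic to the
intersection graph of left ideals of `R_e`. -/
theorem stmt15 (𝒜 : G → AddSubgroup R) [GradedRing 𝒜]
    (hfs : ∀ σ : G, 𝒜 σ ≠ ⊥ →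
      (1 : R) ∈ AddSubgroup.closure ((𝒜 σ : Set R) * (𝒜 (-σ) : Set R))) :
    Nonempty (interGraph (hV 𝒜) ≃g interGraph (V0 𝒜)) := by
  let e := IsFirstStrong.homogeneousIdealOrderIso hfs
  let f : hV 𝒜 ≃ V0 𝒜 := (hVEquivHomogeneousIdeal 𝒜).trans (e.toEquiv.subtypeEquiv
    fun I => (and_congr (map_eq_bot_iff e).not (map_eq_top_iff e).not).symm)
  refine ⟨interGraphIso f fun I J => ?_⟩
  show e _ ⊓ e _ = ⊥ ↔ _
  rw [← map_inf, map_eq_bot_iff, HomogeneousIdeal.eq_bot_iff, HomogeneousIdeal.toIdeal_inf]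
  exact Iff.rfl
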